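/- arXiv:math/0404179 — 3 statements merged into one kernel-verified Lean document; each statement's English description precedes it below -/
import Mathlib

section
/- Let (G,f) ∈ C with |V(G)| = ℵ₀. Then G has a perfect f-factor if and only if (G,f) is not an α-obstruction for any ordinal α. -/
open Cardinal Set
open scoped Classical

namespace FFactor

variable {V : Type}

/-- Degree of `x` with respect to an edge set `F`. -/
def deg (F : Set (Sym2 V)) (x : V) : Cardinal :=
  Cardinal.mk {e : Sym2 V // e ∈ F ∧ x ∈ e}

/-- `(G, f) ∈ C`: edges are genuine 2-element sets and `f x ≤ d_E x`. -/
def inC (E : Set (Sym2 V)) (f : V → Cardinal) : Prop :=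
  (∀ e ∈ E, ¬ e.IsDiag) ∧ ∀ x, f x ≤ deg E x

/-- `F` is an `f`-factor of the graph with edge set `E`. -/
def IsFactor (E F : Set (Sym2 V)) (f : V → Cardinal) : Prop :=
  F ⊆ E ∧ ∀ x, deg F x ≤ f x

/-- `F` is a perfect `f`-factor. -/
def IsPerfect (E F : Set (Sym2 V)) (f : V → Cardinal) : Prop :=
  F ⊆ E ∧ ∀ x, deg F x = f x

/-- The function `f_{x,y}`: decrease `f` by one at `x` and `y` when `1 ≤ f v < ℵ₀`. -/
noncomputable def fxy (f : V → Cardinal) (x y : V) : V → Cardinal := fun v =>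
  if (v = x ∨ v = y) ∧ 1 ≤ f v ∧ f v < ℵ₀ then (((f v).toNat - 1 : ℕ) : Cardinal) else f v

/-- A property of pairs `(G, f)` (over arbitrary vertex types). -/
def GraphProp : Type 1 := ∀ (W : Type), Set (Sym2 W) → (W → Cardinal) → Prop

/-- `P` is a hereditary property. (`P (G,f)` entails `(G,f) ∈ C`.) -/
def Hereditary (P : GraphProp) : Prop :=
  ∀ (W : Type) (E : Set (Sym2 W)) (f : W → Cardinal), P W E f →
    inC E f ∧ ∀ x : W, 0 < f x →
      ∃ y : W, 0 < f y ∧ s(x, y) ∈ E ∧ P W (E \ {s(x, y)}) (fxy f x y)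

/-- `(G,f)` is an `α`-obstruction. -/
inductive IsObstruction : ∀ {W : Type}, Ordinal.{0} → Set (Sym2 W) → (W → Cardinal) → Prop
  | mk {W : Type} (α : Ordinal.{0}) (E : Set (Sym2 W)) (f : W → Cardinal) (x : W)
      (β : W → Ordinal.{0}) (hx : 0 < f x)
      (h : ∀ y : W, s(x, y) ∈ E → 0 < f y →
        IsObstruction (β y) (E \ {s(x, y)}) (fxy f x y))
      (hα : α = ⨆ y : {y : W // s(x, y) ∈ E ∧ 0 < f y}, Order.succ (β y.1)) :
      IsObstruction α E f

/-- The property `P₂`. -/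
def P2 : GraphProp := fun _ E f => inC E f ∧ ∀ α, ¬ IsObstruction α E f

/-- The property `P₁`. -/
def P1 : GraphProp := fun _ E f => inC E f ∧ ∃ F, IsPerfect E F f

/-- `(v_i)_{0 ≤ i < k}` is a trail (`k ≤ ω`, modelled as `k : ℕ∞`). -/
def IsTrail (E : Set (Sym2 V)) (k : ℕ∞) (v : ℕ → V) : Prop :=
  1 ≤ k ∧
  (∀ i : ℕ, 0 < i → (i : ℕ∞) < k → s(v (i - 1), v i) ∈ E) ∧
  (∀ i j : ℕ, 0 < i → 0 < j → (i : ℕ∞) < k → (j : ℕ∞) < k → i ≠ j →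
    s(v (i - 1), v i) ≠ s(v (j - 1), v j))

/-- `(v_i)_{0 ≤ i < k}` is an `F`-augmenting trail. -/
def IsAugTrail (E F : Set (Sym2 V)) (f : V → Cardinal) (k : ℕ∞) (v : ℕ → V) : Prop :=
  IsTrail E k v ∧ 1 < k ∧
  (∀ i : ℕ, 0 < i → (i : ℕ∞) < k → (s(v (i - 1), v i) ∈ F ↔ Even i)) ∧
  deg F (v 0) < f (v 0) ∧
  (k = ⊤ ∨ ∃ n : ℕ, k = (n : ℕ∞) ∧ Even n ∧
    ((v 0 ≠ v (n - 1) ∧ deg F (v (n - 1)) < f (v (n - 1))) ∨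
     (v 0 = v (n - 1) ∧ deg F (v (n - 1)) + 1 < f (v (n - 1)))))

/-- The property `P₄`. -/
def P4 : GraphProp := fun _ E f =>
  inC E f ∧ ∀ F, IsFactor E F f → ∀ x, deg F x < f x →
    ∃ (k : ℕ∞) (v : _ → _), v 0 = x ∧ IsAugTrail E F f k v

/-- `C` is closed unbounded in `o`. -/
def IsClubIn (C : Set Ordinal) (o : Ordinal) : Prop :=
  C ⊆ Set.Iio o ∧
  (∀ a < o, ∃ b ∈ C, a ≤ b) ∧
  (∀ a < o, (C ∩ Set.Iio a).Nonempty → sSup (C ∩ Set.Iio a) = a → a ∈ C)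

/-- `S` is stationary in `o`. -/
def IsStationaryIn (S : Set Ordinal) (o : Ordinal) : Prop :=
  ∀ C, IsClubIn C o → (S ∩ C).Nonempty

/-- `V_α = (V \ A) ∪ f⁻¹(c)`. -/
def subV (f : V → Cardinal) (c : Cardinal) (A : Set V) : Set V :=
  Aᶜ ∪ {x | f x = c}

/-- `E_α = {{x,y} ∈ E : x ∈ V_α, y ∈ V \ A}`. -/
def subE (E : Set (Sym2 V)) (f : V → Cardinal) (c : Cardinal) (A : Set V) : Set (Sym2 V) :=
  {e ∈ E | ∃ x y, e = s(x, y) ∧ x ∈ subV f c A ∧ y ∉ A}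

/-- The edge set of a graph induced on the vertex subset `S`. -/
def inducedE (S : Set V) (E' : Set (Sym2 V)) : Set (Sym2 ↥S) :=
  {e : Sym2 ↥S | e.map Subtype.val ∈ E'}

/-- `(A_α)_{α < c.ord}` is a `P`-destruction of `(G, f)`, `c = κ⁺`. -/
def PDestruction (P : GraphProp) (E : Set (Sym2 V)) (f : V → Cardinal)
    (c : Cardinal) (A : Ordinal → Set V) : Prop :=
  (∀ α < c.ord, ∀ β, α ≤ β → β < c.ord → A α ⊆ A β) ∧
  (∀ α < c.ord, Cardinal.mk (A α) < c) ∧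
  (∀ α < c.ord, Order.IsSuccLimit α → A α = ⋃ β : Set.Iio α, A β.1) ∧
  (⋃ α : Set.Iio c.ord, A α.1) = Set.univ ∧
  IsStationaryIn {α | α < c.ord ∧
    ¬ P ↥(subV f c (A α)) (inducedE (subV f c (A α)) (subE E f c (A α)))
        (fun x => f x.1)} c.ord

/-- `(G, f)` is `P`-destructed. -/
def PDestructed (P : GraphProp) (E : Set (Sym2 V)) (f : V → Cardinal) (c : Cardinal) : Prop :=
  ∃ A : Ordinal → Set V, PDestruction P E f c A

/-- The function `f - d_F`, for `F` a finite factor (with `ℵ₀ - n = ℵ₀`). -/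
noncomputable def fsub (f : V → Cardinal) (F : Set (Sym2 V)) : V → Cardinal := fun x =>
  if f x < ℵ₀ then (((f x).toNat - (deg F x).toNat : ℕ) : Cardinal) else f x

/-- `F` is a `κ`-perfect `f`-factor of `(V, E)`. -/
def IsKPerfect (κ : Cardinal) (E F : Set (Sym2 V)) (f : V → Cardinal) : Prop :=
  IsFactor E F f ∧ (∀ x, f x ≤ κ → deg F x = f x) ∧ ∀ x, κ < f x → 0 < deg F x

/-!
A perfect `f`-factor survives the removal of one of its edges `xy` as a perfect
`f_{x,y}`-factor, so by induction on `α` no `α`-obstruction has one. Conversely, not being an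
obstruction is hereditary: if every admissible edge `xy` at `x` led to some `β_y`-obstruction,
these would assemble into an obstruction at `x`. For a hereditary property on a countable graph
a perfect factor is built greedily: visit the vertices in a schedule in which each of them
recurs infinitely often, and whenever the current demand at the visited vertex is positive,
remove an edge at it that keeps the property and put it into `F`. Every visit to `v` with
positive demand uses an edge at `v`, so `v` ends up covered exactly `f v` times.
-/

section Degree

variable {F : Set (Sym2 V)} {e : Sym2 V} {x : V}

lemma deg_pos_iff : 0 < deg F x ↔ ∃ e ∈ F, x ∈ e := by
  simp [deg, pos_iff_ne_zero, Cardinal.mk_ne_zero_iff]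

lemma deg_sdiff_singleton_add_one (he : e ∈ F) (hx : x ∈ e) :
    deg (F \ {e}) x + 1 = deg F x := by
  have : {e' | e' ∈ F ∧ x ∈ e'} = insert e {e' | e' ∈ F \ {e} ∧ x ∈ e'} := by
    ext e'
    by_cases h : e' = e <;> simp [h, he, hx]
  change #({e' | e' ∈ F \ {e} ∧ x ∈ e'} : Set _) + 1 = #({e' | e' ∈ F ∧ x ∈ e'} : Set _)
  rw [this, Cardinal.mk_insert (by simp)]

lemma deg_sdiff_singleton_of_notMem (hx : x ∉ e) : deg (F \ {e}) x = deg F x := by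
  have : {e' | e' ∈ F \ {e} ∧ x ∈ e'} = {e' | e' ∈ F ∧ x ∈ e'} := by
    ext e'
    by_cases h : e' = e <;> simp_all
  exact Cardinal.mk_congr (Equiv.setCongr this)

lemma deg_le_aleph0 [Countable V] (F : Set (Sym2 V)) (x : V) : deg F x ≤ ℵ₀ :=
  Cardinal.mk_le_aleph0

end Degree

section Reduction

variable {f : V → Cardinal} {x y v : V}

lemma fxy_of_notMem (hv : v ∉ s(x, y)) : fxy f x y v = f v :=
  if_neg fun h => hv (Sym2.mem_iff.mpr h.1)

lemma fxy_of_eq_zero (hv : f v = 0) : fxy f x y v = 0 := by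
  simp [fxy, hv]

lemma fxy_add_one (hv : v ∈ s(x, y)) (hpos : 0 < f v) : fxy f x y v + 1 = f v := by
  rcases lt_or_ge (f v) ℵ₀ with hfin | hinf
  · obtain ⟨n, hn⟩ := Cardinal.lt_aleph0.mp hfin
    have hn0 : n ≠ 0 := by rintro rfl; simp [hn] at hpos
    rw [fxy, if_pos ⟨Sym2.mem_iff.mp hv, Cardinal.one_le_iff_pos.mpr hpos, hfin⟩, hn,
      Cardinal.toNat_natCast]
    norm_cast
    omega
  · rw [fxy, if_neg fun h => h.2.2.not_ge hinf, Cardinal.add_one_eq hinf]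

end Reduction

section Perfect

variable {E F : Set (Sym2 V)} {f : V → Cardinal} {x y : V}

lemma IsPerfect.sdiff_singleton (hF : IsPerfect E F f) (hxy : s(x, y) ∈ F) :
    IsPerfect (E \ {s(x, y)}) (F \ {s(x, y)}) (fxy f x y) := by
  refine ⟨Set.sdiff_subset_sdiff_left hF.1, fun v => ?_⟩
  by_cases hv : v ∈ s(x, y)
  · have hpos : 0 < f v := hF.2 v ▸ deg_pos_iff.mpr ⟨_, hxy, hv⟩
    rw [← Cardinal.add_one_inj, deg_sdiff_singleton_add_one hxy hv, fxy_add_one hv hpos, hF.2]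
  · rw [deg_sdiff_singleton_of_notMem hv, fxy_of_notMem hv, hF.2]

theorem IsObstruction.not_isPerfect {W : Type} {α : Ordinal.{0}} {E : Set (Sym2 W)}
    {f : W → Cardinal} (h : IsObstruction α E f) : ∀ F, ¬ IsPerfect E F f := by
  induction h with
  | mk α E f x β hx _ _ ih =>
    intro F hF
    obtain ⟨e, heF, hxe⟩ := deg_pos_iff.mp (hF.2 x ▸ hx)
    obtain ⟨y, rfl⟩ := Sym2.mem_iff_exists.mp hxe
    have hy : 0 < f y := hF.2 y ▸ deg_pos_iff.mpr ⟨_, heF, Sym2.mem_mk_right x y⟩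
    exact ih y (hF.1 heF) hy _ (hF.sdiff_singleton heF)

lemma inC.sdiff_singleton (h : inC E f) (hxy : s(x, y) ∈ E) :
    inC (E \ {s(x, y)}) (fxy f x y) := by
  refine ⟨fun e he => h.1 e he.1, fun v => ?_⟩
  by_cases hv : v ∈ s(x, y)
  · rcases (zero_le : 0 ≤ f v).eq_or_lt with h0 | hpos
    · rw [fxy_of_eq_zero h0.symm]
      exact zero_le
    · rw [← Cardinal.add_one_le_add_one_iff, fxy_add_one hv hpos,
        deg_sdiff_singleton_add_one hxy hv]
      exact h.2 v
  · rw [fxy_of_notMem hv, deg_sdiff_singleton_of_notMem hv]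
    exact h.2 v

theorem hereditary_P2 : Hereditary P2 := by
  rintro W E f ⟨hC, hobs⟩
  refine ⟨hC, fun x hx => ?_⟩
  by_contra! hbad
  have hβ : ∀ y, s(x, y) ∈ E → 0 < f y → ∃ β, IsObstruction β (E \ {s(x, y)}) (fxy f x y) := by
    intro y hyE hy
    by_contra! h
    exact hbad y hy hyE ⟨hC.sdiff_singleton hyE, h⟩
  choose! β hβ using hβ
  exact hobs _ (IsObstruction.mk _ E f x β hx hβ rfl)

end Perfect

structure Stage (P : GraphProp) (V : Type) where
  edges : Set (Sym2 V)
  demand : V → Cardinal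
  prop : P V edges demand

namespace Stage

variable {P : GraphProp} (hP : Hereditary P) (S : Stage P V) {x : V} {e : Sym2 V}

noncomputable def partner (hx : 0 < S.demand x) : V :=
  ((hP V S.edges S.demand S.prop).2 x hx).choose

lemma partner_spec (hx : 0 < S.demand x) :
    0 < S.demand (S.partner hP hx) ∧ s(x, S.partner hP hx) ∈ S.edges ∧
      P V (S.edges \ {s(x, S.partner hP hx)}) (fxy S.demand x (S.partner hP hx)) :=
  ((hP V S.edges S.demand S.prop).2 x hx).choose_spec

noncomputable def pickedEdge (x : V) : Option (Sym2 V) :=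
  if hx : 0 < S.demand x then some s(x, S.partner hP hx) else none

noncomputable def next (x : V) : Stage P V :=
  if hx : 0 < S.demand x then ⟨_, _, (S.partner_spec hP hx).2.2⟩ else S

lemma next_edges_subset : (S.next hP x).edges ⊆ S.edges := by
  unfold next
  split_ifs
  exacts [Set.sdiff_subset, subset_rfl]

lemma mem_edges_of_mem_pickedEdge (he : e ∈ S.pickedEdge hP x) :
    e ∈ S.edges ∧ e ∉ (S.next hP x).edges := by
  unfold pickedEdge at he
  split_ifs at he with hx
  · obtain rfl := Option.some_injective _ he
    simp [next, hx, (S.partner_spec hP hx).2.1]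
  · simp at he

lemma exists_mem_pickedEdge (hx : 0 < S.demand x) : ∃ e ∈ S.pickedEdge hP x, x ∈ e :=
  ⟨s(x, S.partner hP hx), by simp [pickedEdge, hx], Sym2.mem_mk_left _ _⟩

lemma next_demand_add (v : V) :
    (S.next hP x).demand v + (if ∃ e ∈ S.pickedEdge hP x, v ∈ e then 1 else 0) = S.demand v := by
  by_cases hx : 0 < S.demand x
  · have hy := (S.partner_spec hP hx).1
    simp only [next, pickedEdge, hx, dif_pos, Option.mem_def, Option.some.injEq, exists_eq_left']
    split_ifs with hv
    · rcases Sym2.mem_iff.mp hv with rfl | rfl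
      exacts [fxy_add_one hv hx, fxy_add_one hv hy]
    · rw [add_zero, fxy_of_notMem hv]
  · simp [next, pickedEdge, hx]

noncomputable def greedy (sch : ℕ → V) : ℕ → Stage P V
  | 0 => S
  | n + 1 => (greedy sch n).next hP (sch n)

noncomputable def greedyEdge (sch : ℕ → V) (n : ℕ) : Option (Sym2 V) :=
  (S.greedy hP sch n).pickedEdge hP (sch n)

def greedyFactor (sch : ℕ → V) : Set (Sym2 V) :=
  {e | ∃ n, e ∈ S.greedyEdge hP sch n}

variable (sch : ℕ → V)

lemma greedy_edges_antitone : Antitone fun n => (S.greedy hP sch n).edges :=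
  antitone_nat_of_succ_le fun _ => next_edges_subset _ _

lemma greedyEdge_injective {n m : ℕ} (hn : e ∈ S.greedyEdge hP sch n)
    (hm : e ∈ S.greedyEdge hP sch m) : n = m := by
  have key : ∀ {i j}, e ∈ S.greedyEdge hP sch i → e ∈ S.greedyEdge hP sch j → ¬ i < j :=
    fun hi hj hij => (mem_edges_of_mem_pickedEdge _ _ hi).2
      (greedy_edges_antitone hP S sch hij (mem_edges_of_mem_pickedEdge _ _ hj).1)
  exact le_antisymm (not_lt.mp (key hm hn)) (not_lt.mp (key hn hm))

lemma greedyFactor_subset : S.greedyFactor hP sch ⊆ S.edges := fun _ ⟨n, hn⟩ =>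
  greedy_edges_antitone hP S sch (Nat.zero_le n) (mem_edges_of_mem_pickedEdge _ _ hn).1

lemma deg_greedyFactor (v : V) :
    deg (S.greedyFactor hP sch) v = #{n | ∃ e ∈ S.greedyEdge hP sch n, v ∈ e} := by
  set T := {n | ∃ e ∈ S.greedyEdge hP sch n, v ∈ e}
  have hinj : Set.InjOn (S.greedyEdge hP sch) T := fun n ⟨e, he, _⟩ m _ hnm =>
    greedyEdge_injective hP S sch he (hnm ▸ he)
  have himage : S.greedyEdge hP sch '' T = some '' {e | e ∈ S.greedyFactor hP sch ∧ v ∈ e} := by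
    ext o
    constructor
    · rintro ⟨n, ⟨e, he, hve⟩, rfl⟩
      exact ⟨e, ⟨⟨n, he⟩, hve⟩, he.symm⟩
    · rintro ⟨e, ⟨⟨n, he⟩, hve⟩, rfl⟩
      exact ⟨n, ⟨e, he, hve⟩, he⟩
  rw [← Cardinal.mk_image_eq_of_injOn _ _ hinj, himage,
    Cardinal.mk_image_eq (Option.some_injective _)]
  rfl

lemma greedy_demand_add_count (v : V) (n : ℕ) :
    (S.greedy hP sch n).demand v + Nat.count (fun m => ∃ e ∈ S.greedyEdge hP sch m, v ∈ e) n
      = S.demand v := by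
  induction n with
  | zero => simp [greedy]
  | succ n ih =>
    rw [Nat.count_succ, Nat.cast_add, ← ih, ← add_assoc, add_right_comm, Nat.cast_ite,
      Nat.cast_one, Nat.cast_zero]
    exact congrArg (· + _) (next_demand_add hP _ v)

lemma deg_greedyFactor_eq {v : V} (hsch : ∀ w, ∃ᶠ n in Filter.atTop, sch n = w)
    (hv : S.demand v ≤ ℵ₀) : deg (S.greedyFactor hP sch) v = S.demand v := by
  set p := fun m => ∃ e ∈ S.greedyEdge hP sch m, v ∈ e
  rw [deg_greedyFactor]
  rcases Set.finite_or_infinite {n | p n} with hfin | hinf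
  · obtain ⟨N, hN⟩ := hfin.bddAbove
    -- `v` is visited again after it was last covered, so its demand has dropped to `0`
    obtain ⟨n, hNn, rfl⟩ := Filter.frequently_atTop.mp (hsch v) (N + 1)
    have hzero : (S.greedy hP sch n).demand (sch n) = 0 := by
      by_contra h
      have := hN (exists_mem_pickedEdge hP _ (pos_iff_ne_zero.mpr h))
      omega
    have hT : {m | p m} = ↑((Finset.range n).filter p) := by
      ext m
      simp only [Set.mem_ofPred_eq, Finset.coe_filter, Finset.mem_range, iff_and_self]
      exact fun hm => (hN hm).trans_lt hNn
    rw [← greedy_demand_add_count hP S sch (sch n) n, hzero, zero_add, hT,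
      Nat.count_eq_card_filter_range]
    exact Cardinal.mk_coe_finset
  · have hinfinite : ¬ S.demand v < ℵ₀ := by
      intro hlt
      obtain ⟨k, hk⟩ := Cardinal.lt_aleph0.mp hlt
      have := greedy_demand_add_count hP S sch v (Nat.nth p (k + 1))
      rw [Nat.count_nth_of_infinite hinf, hk] at this
      have := le_add_self.trans_eq this
      norm_cast at this
      omega
    have : Infinite {n | p n} := hinf.to_subtype
    rw [Cardinal.mk_eq_aleph0, le_antisymm hv (not_lt.mp hinfinite)]

end Stage

lemma exists_seq_frequently_eq (α : Type*) [Countable α] [Nonempty α] :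
    ∃ u : ℕ → α, ∀ a, ∃ᶠ n in Filter.atTop, u n = a := by
  obtain ⟨g, hg⟩ := exists_surjective_nat α
  refine ⟨fun n => g n.unpair.1, fun a => Filter.frequently_atTop.mpr fun N => ?_⟩
  obtain ⟨k, rfl⟩ := hg a
  exact ⟨Nat.pair k N, Nat.right_le_pair k N, by simp⟩

theorem Hereditary.exists_isPerfect [Countable V] {P : GraphProp} (hP : Hereditary P)
    {E : Set (Sym2 V)} {f : V → Cardinal} (h : P V E f) : ∃ F, IsPerfect E F f := by
  cases isEmpty_or_nonempty V
  · exact ⟨∅, Set.empty_subset _, isEmptyElim⟩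
  obtain ⟨sch, hsch⟩ := exists_seq_frequently_eq V
  let S : Stage P V := ⟨E, f, h⟩
  refine ⟨S.greedyFactor hP sch, S.greedyFactor_subset hP sch, fun v => ?_⟩
  exact S.deg_greedyFactor_eq hP sch hsch ((hP V E f h).1.2 v |>.trans (deg_le_aleph0 E v))

/-- Corollary 1(1). -/
theorem statement_6 (V : Type) (E : Set (Sym2 V)) (f : V → Cardinal)
    (hC : inC E f) (hV : Cardinal.mk V = ℵ₀) :
    (∃ F, IsPerfect E F f) ↔ ∀ α, ¬ IsObstruction α E f := by
  have : Countable V := Cardinal.mk_le_aleph0_iff.mp hV.le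
  exact ⟨fun ⟨F, hF⟩ α hα => hα.not_isPerfect F hF,
    fun h => hereditary_P2.exists_isPerfect ⟨hC, h⟩⟩

end FFactor
end

section
/- Let κ be an infinite cardinal and (G,f) ∈ C with |V(G)| = κ⁺. Then G possesses a perfect f-factor if and only if there is an increasing continuous sequence (A_α)_{α<κ⁺} of subsets of V(G) such that: (i) A₀ = ∅ and V(G) = ⋃_{α<κ⁺} A_α; (ii) |A_{α+1} \ A_α| = κ for all α < κ⁺; (iii) for all α < κ⁺ there exists a κ-perfect g_α-factor of the graph (B_α, {{x,y} ∈ E : x ∈ B_α, y ∈ A_{α+1} \ A_α}), where B_α = A_{α+1} \ (A_α \ f⁻¹(κ⁺)) and g_α = f ↾ B_α. -/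
open Cardinal Set
open scoped Classical

namespace FFactor

variable {V : Type}

/-!
Given a perfect `f`-factor `F`, enumerate `V = {v_α : α < κ⁺}` and let `A_{α+1}` be the closure
of `A_α ∪ {v_α} ∪ P_α` (with `P_α` a set of `κ` vertices outside `A_α`) under taking all
`F`-neighbours of vertices with `f x ≤ κ` and one `F`-neighbour outside `A_α` of vertices with
`f x = κ⁺`. These sets have size `κ`, and the `F`-edges of the `α`-th block form a `κ`-perfect
factor of it: a small vertex first appears in a block containing all its `F`-neighbours, and every
big vertex of the block received a fresh neighbour.

Conversely, glue `κ`-perfect factors of the blocks. A small vertex has edges only in the block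
where it is new, so its degree is `f x`; a big vertex `x` has an edge into the new part
`A_{α+1} \ A_α` for each of the `κ⁺` stages `α` after it appears, and these parts are disjoint,
so its degree is `κ⁺ = f x`.
-/

def nbhd (F : Set (Sym2 V)) (x : V) : Set V := {y | s(x, y) ∈ F}

theorem deg_eq_mk_nbhd (F : Set (Sym2 V)) (x : V) : deg F x = #(nbhd F x) := by
  refine Cardinal.mk_congr (Equiv.ofBijective (fun e => ⟨s(x, e.1), e.2, Sym2.mem_mk_left x e.1⟩)
    ⟨fun a b h => Subtype.ext ?_, fun ⟨e, he, hx⟩ => ?_⟩).symm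
  · simpa only [Subtype.mk.injEq, Sym2.congr_right] using h
  · obtain ⟨y, rfl⟩ := Sym2.mem_iff_exists.mp hx
    exact ⟨⟨y, he⟩, rfl⟩

theorem deg_pos_iff_s13 {F : Set (Sym2 V)} {x : V} : 0 < deg F x ↔ (nbhd F x).Nonempty := by
  rw [deg_eq_mk_nbhd, pos_iff_ne_zero, Ne, Cardinal.mk_eq_zero_iff, not_isEmpty_iff,
    Set.nonempty_coe_sort]

theorem deg_le_mk (F : Set (Sym2 V)) (x : V) : deg F x ≤ #V :=
  deg_eq_mk_nbhd F x ▸ Cardinal.mk_set_le _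

theorem nbhd_inducedE (S : Set V) (F : Set (Sym2 V)) (x : S) :
    Subtype.val '' nbhd (inducedE S F) x = nbhd F x.1 ∩ S := by
  ext y
  simp [nbhd, inducedE, and_comm]

theorem deg_inducedE (S : Set V) (F : Set (Sym2 V)) (x : S) :
    deg (inducedE S F) x = #↥(nbhd F x.1 ∩ S) := by
  rw [deg_eq_mk_nbhd, ← nbhd_inducedE, Cardinal.mk_image_eq Subtype.val_injective]

theorem nbhd_image_map_val {S : Set V} (G : Set (Sym2 S)) (x : S) :
    nbhd (Sym2.map Subtype.val '' G) x.1 = Subtype.val '' nbhd G x := by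
  ext y
  constructor
  · rintro ⟨e, he, hex⟩
    have hy : y ∈ Sym2.map Subtype.val e := hex ▸ Sym2.mem_mk_right _ _
    obtain ⟨z, -, rfl⟩ := Sym2.mem_map.mp hy
    refine ⟨z, ?_, rfl⟩
    have : e = s(x, z) := Sym2.map.injective Subtype.val_injective (hex.trans (Sym2.map_mk ..).symm)
    exact (this ▸ he : s(x, z) ∈ G)
  · rintro ⟨z, hz, rfl⟩
    exact ⟨_, hz, Sym2.map_mk ..⟩

theorem deg_image_map_val {S : Set V} (G : Set (Sym2 S)) (x : S) :
    deg (Sym2.map Subtype.val '' G) x.1 = deg G x := by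
  rw [deg_eq_mk_nbhd, deg_eq_mk_nbhd, nbhd_image_map_val,
    Cardinal.mk_image_eq Subtype.val_injective]

theorem deg_congr {F F' : Set (Sym2 V)} {x : V} (h : nbhd F x = nbhd F' x) :
    deg F x = deg F' x := by
  rw [deg_eq_mk_nbhd, deg_eq_mk_nbhd, h]

def closureUnder (g : V → Set V) (S : Set V) : Set V :=
  ⋃ n : ℕ, (fun T => T ∪ ⋃ x ∈ T, g x)^[n] S

theorem subset_closureUnder (g : V → Set V) (S : Set V) : S ⊆ closureUnder g S :=
  Set.subset_iUnion (fun n => (fun T => T ∪ ⋃ x ∈ T, g x)^[n] S) 0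

theorem closureUnder_closed {g : V → Set V} {S : Set V} {x : V} (hx : x ∈ closureUnder g S) :
    g x ⊆ closureUnder g S := by
  obtain ⟨_, ⟨n, rfl⟩, hn⟩ := hx
  refine fun y hy => Set.mem_iUnion.mpr ⟨n + 1, ?_⟩
  rw [Function.iterate_succ_apply']
  exact Or.inr (Set.mem_biUnion hn hy)

theorem mk_closureUnder_le {κ : Cardinal} (hκ : ℵ₀ ≤ κ) {g : V → Set V} (hg : ∀ x, #(g x) ≤ κ)
    {S : Set V} (hS : #S ≤ κ) : #(closureUnder g S) ≤ κ := by
  have hstep : ∀ T : Set V, #T ≤ κ → #↥(T ∪ ⋃ x ∈ T, g x) ≤ κ := fun T hT =>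
    calc #↥(T ∪ ⋃ x ∈ T, g x) ≤ κ + κ * κ :=
          (Cardinal.mk_union_le _ _).trans
            (add_le_add hT ((Cardinal.mk_biUnion_le _ _).trans (mul_le_mul' hT (ciSup_le' (hg ·)))))
      _ = κ := by rw [Cardinal.mul_eq_self hκ, Cardinal.add_eq_self hκ]
  have hiter : ∀ n : ℕ, #((fun T => T ∪ ⋃ x ∈ T, g x)^[n] S) ≤ κ := by
    intro n
    induction n with
    | zero => exact hS
    | succ n ih => rw [Function.iterate_succ_apply']; exact hstep _ ih
  calc #(closureUnder g S) ≤ κ * κ :=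
        (Cardinal.mk_iUnion_le _).trans
          (mul_le_mul' (Cardinal.mk_nat.trans_le hκ) (ciSup_le' hiter))
    _ = κ := Cardinal.mul_eq_self hκ

universe u

theorem lift_le_mk_Ioo_ord {c : Cardinal.{u}} (hc : ℵ₀ ≤ c) {δ : Ordinal.{u}} (hδ : δ < c.ord) :
    Cardinal.lift.{u + 1} c ≤ #(Set.Ioo δ c.ord) := by
  by_contra! h
  have hsucc : #(Set.Iio (Order.succ δ)) < Cardinal.lift.{u + 1} c := by
    rw [Cardinal.mk_Iio_ordinal, Cardinal.lift_lt, ← Cardinal.lt_ord]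
    exact (Cardinal.isSuccLimit_ord hc).succ_lt hδ
  have hcover : Set.Iio c.ord ⊆ Set.Iio (Order.succ δ) ∪ Set.Ioo δ c.ord := fun β hβ =>
    (le_or_gt β δ).imp Order.lt_succ_of_le (⟨·, hβ⟩)
  refine (lt_irrefl (Cardinal.lift.{u + 1} c)) ?_
  calc Cardinal.lift.{u + 1} c = #(Set.Iio c.ord) := by
        rw [Cardinal.mk_Iio_ordinal, Cardinal.card_ord]
    _ ≤ #(Set.Iio (Order.succ δ)) + #(Set.Ioo δ c.ord) :=
        (Cardinal.mk_le_mk_of_subset hcover).trans (Cardinal.mk_union_le _ _)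
    _ < Cardinal.lift.{u + 1} c := Cardinal.add_lt_of_lt (by simpa using hc) hsucc h

theorem exists_mem_add_one_diff {A : Ordinal → Set V} {o : Ordinal} (h0 : A 0 = ∅)
    (hlim : ∀ α < o, Order.IsSuccLimit α → A α = ⋃ β : Set.Iio α, A β.1) {x : V} :
    ∀ γ < o, x ∈ A γ → ∃ δ < γ, x ∈ A (δ + 1) \ A δ := by
  intro γ
  induction γ using WellFoundedLT.induction with
  | _ γ IH =>
    intro hγ hx
    rcases Ordinal.zero_or_succ_or_isSuccLimit γ with rfl | ⟨δ, rfl⟩ | hγlim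
    · simp [h0] at hx
    · by_cases hxδ : x ∈ A δ
      · obtain ⟨ε, hε, hxε⟩ := IH δ (Order.lt_succ δ) ((Order.lt_succ δ).trans hγ) hxδ
        exact ⟨ε, hε.trans (Order.lt_succ δ), hxε⟩
      · exact ⟨δ, Order.lt_succ δ, by rwa [← Order.succ_eq_add_one], hxδ⟩
    · rw [hlim γ hγ hγlim] at hx
      obtain ⟨⟨β, hβ⟩, hxβ⟩ := Set.mem_iUnion.mp hx
      obtain ⟨δ, hδ, hxδ⟩ := IH β hβ (hβ.trans hγ) hxβ
      exact ⟨δ, hδ.trans hβ, hxδ⟩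

theorem eq_of_mem_add_one_diff {A : Ordinal → Set V} {o : Ordinal}
    (hmono : ∀ α < o, ∀ β, α ≤ β → β < o → A α ⊆ A β) {x : V} :
    ∀ {α β : Ordinal}, α < o → β < o → x ∈ A (α + 1) \ A α → x ∈ A (β + 1) \ A β → α = β := by
  have key : ∀ α β : Ordinal, β < o → x ∈ A (α + 1) → x ∉ A β → ¬ α < β := by
    intro α β hβ hxα hxβ hαβ
    have hαβ' : α + 1 ≤ β := Order.add_one_le_iff.mpr hαβ
    exact hxβ (hmono (α + 1) (hαβ'.trans_lt hβ) β hαβ' hβ hxα)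
  intro α β hα hβ hxα hxβ
  exact le_antisymm (not_lt.mp (key β α hα hxβ.1 hxα.2)) (not_lt.mp (key α β hβ hxα.1 hxβ.2))

/-- The vertex set `B_α` of the statement, for `A = A_α`, `A' = A_{α+1}` and `c = κ⁺`. -/
def stageVerts (f : V → Cardinal) (c : Cardinal) (A A' : Set V) : Set V :=
  A' \ (A \ {x | f x = c})

def stageEdges (E : Set (Sym2 V)) (f : V → Cardinal) (c : Cardinal) (A A' : Set V) :
    Set (Sym2 V) :=
  {e ∈ E | ∃ x y, e = s(x, y) ∧ x ∈ stageVerts f c A A' ∧ y ∈ A' \ A}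

section StageEdges
variable {E : Set (Sym2 V)} {f : V → Cardinal} {c : Cardinal} {A A' : Set V} {x y : V}

theorem diff_subset_stageVerts : A' \ A ⊆ stageVerts f c A A' :=
  fun _ hx => ⟨hx.1, fun h => hx.2 h.1⟩

theorem mem_diff_of_mem_stageVerts (hx : x ∈ stageVerts f c A A') (hfx : f x ≠ c) :
    x ∈ A' \ A :=
  ⟨hx.1, fun h => hx.2 ⟨h, hfx⟩⟩

theorem mem_stageVerts_of_mem_stageEdges (h : s(x, y) ∈ stageEdges E f c A A') :
    x ∈ stageVerts f c A A' := by
  obtain ⟨-, a, b, hab, ha, hb⟩ := h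
  rcases Sym2.eq_iff.mp hab with ⟨rfl, -⟩ | ⟨rfl, -⟩
  exacts [ha, diff_subset_stageVerts hb]

theorem mem_diff_of_mem_stageEdges (h : s(x, y) ∈ stageEdges E f c A A') (hx : x ∉ A' \ A) :
    y ∈ A' \ A := by
  obtain ⟨-, a, b, hab, -, hb⟩ := h
  rcases Sym2.eq_iff.mp hab with ⟨-, rfl⟩ | ⟨rfl, -⟩
  exacts [hb, absurd hb hx]

end StageEdges

section Gluing
variable {E : Set (Sym2 V)} {f : V → Cardinal} {c : Cardinal} {A : Ordinal → Set V}
  (FF : ∀ α, Set (Sym2 ↥(stageVerts f c (A α) (A (α + 1)))))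

def gluedFactor (o : Ordinal) : Set (Sym2 V) := ⋃ α < o, Sym2.map Subtype.val '' FF α

variable {FF} {o : Ordinal}

theorem mem_stageEdges_of_mem_gluedFactor (hFF : ∀ α < o, FF α ⊆
      inducedE (stageVerts f (c) (A α) (A (α + 1)))
        (stageEdges E f (c) (A α) (A (α + 1))))
    {e : Sym2 V} (he : e ∈ gluedFactor FF o) :
    ∃ α < o, e ∈ Sym2.map Subtype.val '' FF α ∧
      e ∈ stageEdges E f (c) (A α) (A (α + 1)) := by
  obtain ⟨α, hα, e', he', rfl⟩ := Set.mem_iUnion₂.mp he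
  exact ⟨α, hα, ⟨e', he', rfl⟩, hFF α hα he'⟩

theorem deg_gluedFactor_of_ne (hFF : ∀ α < o, FF α ⊆
      inducedE (stageVerts f (c) (A α) (A (α + 1)))
        (stageEdges E f (c) (A α) (A (α + 1))))
    (hmono : ∀ α < o, ∀ β, α ≤ β → β < o → A α ⊆ A β) {x : V} (hx : f x ≠ c)
    {δ : Ordinal} (hδ : δ < o) (hxδ : x ∈ A (δ + 1) \ A δ) :
    deg (gluedFactor FF o) x = deg (FF δ) ⟨x, diff_subset_stageVerts hxδ⟩ := by
  rw [← deg_image_map_val]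
  refine deg_congr (Set.Subset.antisymm (fun y hy => ?_)
    fun y hy => Set.mem_iUnion₂.mpr ⟨δ, hδ, hy⟩)
  obtain ⟨α, hα, hxyα, hxyE⟩ := mem_stageEdges_of_mem_gluedFactor hFF hy
  have hxα := mem_diff_of_mem_stageVerts (mem_stageVerts_of_mem_stageEdges hxyE) hx
  rwa [eq_of_mem_add_one_diff hmono hδ hα hxδ hxα]

theorem exists_nbhd_gluedFactor_of_lt {κ : Cardinal} (hFF : ∀ α < o, IsKPerfect κ
      (inducedE (stageVerts f (c) (A α) (A (α + 1)))
        (stageEdges E f (c) (A α) (A (α + 1)))) (FF α) (fun x => f x.1))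
    (ho : Order.IsSuccLimit o) (hmono : ∀ α < o, ∀ β, α ≤ β → β < o → A α ⊆ A β)
    {x : V} (hx : f x = c) (hκx : κ < f x) {δ : Ordinal} (hxδ : x ∈ A (δ + 1) \ A δ)
    {α : Ordinal} (hδα : δ < α) (hα : α < o) :
    ∃ y ∈ nbhd (gluedFactor FF o) x, y ∈ A (α + 1) \ A α := by
  have hxα : x ∈ A α :=
    hmono (δ + 1) ((Order.add_one_le_iff.mpr hδα).trans_lt hα) α
      (Order.add_one_le_iff.mpr hδα) hα hxδ.1
  have hxB : x ∈ stageVerts f (c) (A α) (A (α + 1)) :=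
    ⟨hmono α hα (α + 1) (Order.le_succ α) (ho.succ_lt hα) hxα, fun h => h.2 hx⟩
  obtain ⟨z, hz⟩ := deg_pos_iff_s13.mp ((hFF α hα).2.2 ⟨x, hxB⟩ hκx)
  refine ⟨z, Set.mem_iUnion₂.mpr ⟨α, hα, _, hz, Sym2.map_mk ..⟩, ?_⟩
  have hxz : s(x, z.1) ∈ stageEdges E f (c) (A α) (A (α + 1)) :=
    (hFF α hα).1.1 hz
  exact mem_diff_of_mem_stageEdges hxz fun h => h.2 hxα

theorem le_deg_gluedFactor {κ : Cardinal} (hFF : ∀ α < c.ord, IsKPerfect κ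
      (inducedE (stageVerts f c (A α) (A (α + 1)))
        (stageEdges E f c (A α) (A (α + 1)))) (FF α) (fun x => f x.1))
    (hc : ℵ₀ ≤ c) (hmono : ∀ α < c.ord, ∀ β, α ≤ β → β < c.ord → A α ⊆ A β)
    {x : V} (hx : f x = c) (hκx : κ < f x) {δ : Ordinal} (hδ : δ < c.ord)
    (hxδ : x ∈ A (δ + 1) \ A δ) :
    c ≤ deg (gluedFactor FF c.ord) x := by
  choose y hy hyα using fun α (hα : α ∈ Set.Ioo δ c.ord) =>
    exists_nbhd_gluedFactor_of_lt hFF (Cardinal.isSuccLimit_ord hc) hmono hx hκx hxδ hα.1 hα.2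
  let g : Set.Ioo δ c.ord → nbhd (gluedFactor FF c.ord) x := fun α => ⟨y α α.2, hy α α.2⟩
  have hg : Function.Injective g := fun α β h => by
    have hαβ : y α α.2 = y β β.2 := Subtype.ext_iff.mp h
    refine Subtype.ext (eq_of_mem_add_one_diff hmono α.2.2 β.2.2 (hyα α α.2) ?_)
    exact hαβ ▸ hyα β β.2
  rw [deg_eq_mk_nbhd, ← Cardinal.lift_le.{1}]
  calc Cardinal.lift.{1} c ≤ #(Set.Ioo δ c.ord) := lift_le_mk_Ioo_ord hc hδ
    _ ≤ _ := by simpa using Cardinal.lift_mk_le_lift_mk_of_injective hg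

theorem gluedFactor_subset (hFF : ∀ α < o, FF α ⊆
      inducedE (stageVerts f (c) (A α) (A (α + 1)))
        (stageEdges E f (c) (A α) (A (α + 1)))) :
    gluedFactor FF o ⊆ E := fun _ he =>
  let ⟨_, _, _, he⟩ := mem_stageEdges_of_mem_gluedFactor hFF he
  he.1

end Gluing

theorem exists_isPerfect_of_stages {κ : Cardinal} (hκ : ℵ₀ ≤ κ) {E : Set (Sym2 V)}
    {f : V → Cardinal} (hV : #V = Order.succ κ) (hf : ∀ x, f x ≤ Order.succ κ)
    {A : Ordinal → Set V} (h0 : A 0 = ∅)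
    (hmono : ∀ α < (Order.succ κ).ord, ∀ β, α ≤ β → β < (Order.succ κ).ord → A α ⊆ A β)
    (hlim : ∀ α < (Order.succ κ).ord, Order.IsSuccLimit α → A α = ⋃ β : Set.Iio α, A β.1)
    (hcover : (⋃ α : Set.Iio (Order.succ κ).ord, A α.1) = Set.univ)
    (hfac : ∀ α < (Order.succ κ).ord, ∃ F, IsKPerfect κ
      (inducedE (stageVerts f (Order.succ κ) (A α) (A (α + 1)))
        (stageEdges E f (Order.succ κ) (A α) (A (α + 1)))) F (fun x => f x.1)) :
    ∃ F, IsPerfect E F f := by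
  choose! FF hFF using hfac
  have hstage : ∀ x, ∃ δ < (Order.succ κ).ord, x ∈ A (δ + 1) \ A δ := fun x => by
    obtain ⟨⟨γ, hγ⟩, hxγ⟩ := Set.mem_iUnion.mp (hcover.symm ▸ Set.mem_univ x)
    obtain ⟨δ, hδ, hxδ⟩ := exists_mem_add_one_diff h0 hlim γ hγ hxγ
    exact ⟨δ, hδ.trans hγ, hxδ⟩
  refine ⟨gluedFactor FF (Order.succ κ).ord,
    gluedFactor_subset (fun α hα => (hFF α hα).1.1), fun x => ?_⟩
  obtain ⟨δ, hδ, hxδ⟩ := hstage x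
  rcases le_or_gt (f x) κ with hx | hx
  · rw [deg_gluedFactor_of_ne (fun α hα => (hFF α hα).1.1) hmono
      (hx.trans_lt (Order.lt_succ κ)).ne hδ hxδ]
    exact (hFF δ hδ).2.1 _ hx
  have hxc : f x = Order.succ κ := (hf x).antisymm (Order.succ_le_of_lt hx)
  rw [hxc]
  exact ((deg_le_mk _ x).trans_eq hV).antisymm
    (le_deg_gluedFactor hFF (hκ.trans (Order.le_succ κ)) hmono hxc hx hδ hxδ)

theorem exists_isKPerfect_stage {κ : Cardinal} {E F : Set (Sym2 V)} {f : V → Cardinal}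
    (hF : IsPerfect E F f) (hf : ∀ x, f x ≤ Order.succ κ) {A A' : Set V}
    (hA : ∀ x ∈ A, f x ≤ κ → nbhd F x ⊆ A) (hA' : ∀ x ∈ A', f x ≤ κ → nbhd F x ⊆ A')
    (hbig : ∀ x ∈ A', κ < f x → ∃ y ∈ nbhd F x, y ∈ A' \ A) :
    ∃ F', IsKPerfect κ (inducedE (stageVerts f (Order.succ κ) A A')
      (stageEdges E f (Order.succ κ) A A')) F' (fun x => f x.1) := by
  set B := stageVerts f (Order.succ κ) A A'
  set EB := stageEdges E f (Order.succ κ) A A'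
  have hdeg : ∀ x : B, deg (inducedE B (F ∩ EB)) x = #↥(nbhd (F ∩ EB) x.1 ∩ B) :=
    deg_inducedE B (F ∩ EB)
  refine ⟨inducedE B (F ∩ EB), ⟨fun e he => he.2, fun x => ?_⟩, fun x hx => ?_, fun x hx => ?_⟩
  · calc deg (inducedE B (F ∩ EB)) x = #↥(nbhd (F ∩ EB) x.1 ∩ B) := hdeg x
      _ ≤ #(nbhd F x.1) := Cardinal.mk_le_mk_of_subset fun y hy => hy.1.1
      _ = f x.1 := (deg_eq_mk_nbhd F x.1).symm.trans (hF.2 x.1)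
  · have hxN : x.1 ∈ A' \ A := mem_diff_of_mem_stageVerts x.2 (hx.trans_lt (Order.lt_succ κ)).ne
    have hnbhd : nbhd (F ∩ EB) x.1 ∩ B = nbhd F x.1 := by
      refine Set.Subset.antisymm (fun y hy => hy.1.1) fun y hy => ?_
      have hyB : y ∈ B := by
        refine ⟨hA' x.1 x.2.1 hx hy, fun ⟨hyA, hyc⟩ => hxN.2 (hA y hyA ?_ ?_)⟩
        · exact Order.lt_succ_iff.mp ((hf y).lt_of_ne hyc)
        · show s(y, x.1) ∈ F
          rwa [Sym2.eq_swap]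
      exact ⟨⟨hy, hF.1 hy, y, x.1, Sym2.eq_swap, hyB, hxN⟩, hyB⟩
    calc deg (inducedE B (F ∩ EB)) x = #↥(nbhd (F ∩ EB) x.1 ∩ B) := hdeg x
      _ = #(nbhd F x.1) := by rw [hnbhd]
      _ = f x.1 := (deg_eq_mk_nbhd F x.1).symm.trans (hF.2 x.1)
  · obtain ⟨y, hyF, hyN⟩ := hbig x.1 x.2.1 hx
    have hyB : y ∈ B := diff_subset_stageVerts hyN
    exact deg_pos_iff_s13.mpr ⟨⟨y, hyB⟩, hyF, hF.1 hyF, x.1, y, rfl, x.2, hyN⟩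

section StageSeq
variable (κ : Cardinal) (F : Set (Sym2 V)) (f : V → Cardinal)

/-- A big vertex needs only one fresh neighbour per stage: a `κ`-perfect factor asks no more. -/
noncomputable def witnessNbhd (A : Set V) (x : V) : Set V :=
  if f x ≤ κ then nbhd F x else if h : (nbhd F x \ A).Nonempty then {h.some} else ∅

noncomputable def padding (A : Set V) : Set V :=
  if h : ∃ P ⊆ Aᶜ, #P = κ then h.choose else ∅

noncomputable def stageSeq (enum : Ordinal → V) (α : Ordinal) : Set V :=
  Ordinal.limitRecOn α ∅
    (fun β Aβ => closureUnder (witnessNbhd κ F f Aβ) (Aβ ∪ {enum β} ∪ padding κ Aβ))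
    (fun β _ IH => ⋃ γ : Set.Iio β, IH γ.1 γ.2)

variable {κ F f}

theorem mk_witnessNbhd_le (hκ : ℵ₀ ≤ κ) (hF : ∀ x, deg F x ≤ f x) (A : Set V) (x : V) :
    #(witnessNbhd κ F f A x) ≤ κ := by
  unfold witnessNbhd
  split_ifs with hx
  · exact (deg_eq_mk_nbhd F x ▸ hF x).trans hx
  · exact Cardinal.mk_singleton _ ▸ Cardinal.one_le_aleph0.trans hκ
  · simp

theorem witnessNbhd_of_le {A : Set V} {x : V} (hx : f x ≤ κ) : witnessNbhd κ F f A x = nbhd F x :=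
  if_pos hx

theorem exists_mem_witnessNbhd {A : Set V} {x : V} (hx : ¬ f x ≤ κ)
    (h : (nbhd F x \ A).Nonempty) : ∃ y ∈ nbhd F x \ A, y ∈ witnessNbhd κ F f A x := by
  rw [witnessNbhd, if_neg hx, dif_pos h]
  exact ⟨h.some, h.some_mem, rfl⟩

theorem mk_padding_le (A : Set V) : #(padding κ A) ≤ κ := by
  unfold padding
  split_ifs with h
  exacts [h.choose_spec.2.le, by simp]

theorem padding_spec {A : Set V} (h : κ ≤ #↥Aᶜ) : padding κ A ⊆ Aᶜ ∧ #(padding κ A) = κ := by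
  have hP : ∃ P ⊆ Aᶜ, #P = κ := Cardinal.le_mk_iff_exists_subset.mp h
  rw [padding, dif_pos hP]
  exact hP.choose_spec

variable (enum : Ordinal → V)

theorem stageSeq_zero : stageSeq κ F f enum 0 = ∅ :=
  Ordinal.limitRecOn_zero _ _ _

theorem stageSeq_add_one (α : Ordinal) : stageSeq κ F f enum (α + 1) =
    closureUnder (witnessNbhd κ F f (stageSeq κ F f enum α))
      (stageSeq κ F f enum α ∪ {enum α} ∪ padding κ (stageSeq κ F f enum α)) :=
  Ordinal.limitRecOn_add_one _ _ _ _

theorem stageSeq_limit {α : Ordinal} (hα : Order.IsSuccLimit α) :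
    stageSeq κ F f enum α = ⋃ β : Set.Iio α, stageSeq κ F f enum β.1 :=
  Ordinal.limitRecOn_limit _ _ _ _ hα

theorem stageSeq_subset_add_one (α : Ordinal) :
    stageSeq κ F f enum α ⊆ stageSeq κ F f enum (α + 1) := by
  rw [stageSeq_add_one]
  exact Set.subset_union_left.trans (Set.subset_union_left.trans (subset_closureUnder _ _))

theorem stageSeq_mono {α β : Ordinal} (h : α ≤ β) :
    stageSeq κ F f enum α ⊆ stageSeq κ F f enum β := by
  induction β using WellFoundedLT.induction with
  | _ β IH =>
    rcases h.eq_or_lt with rfl | hlt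
    · exact subset_rfl
    rcases Ordinal.zero_or_succ_or_isSuccLimit β with rfl | ⟨γ, rfl⟩ | hβ
    · exact (not_lt_zero hlt).elim
    · rw [Order.succ_eq_add_one]
      exact (IH γ (Order.lt_succ γ) (Order.lt_succ_iff.mp hlt)).trans
        (stageSeq_subset_add_one enum γ)
    · rw [stageSeq_limit enum hβ]
      exact Set.subset_iUnion (fun γ : Set.Iio β => stageSeq κ F f enum γ.1) ⟨α, hlt⟩

theorem nbhd_subset_stageSeq {α : Ordinal} {x : V} (hx : x ∈ stageSeq κ F f enum α)
    (hfx : f x ≤ κ) : nbhd F x ⊆ stageSeq κ F f enum α := by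
  induction α using WellFoundedLT.induction with
  | _ α IH =>
    rcases Ordinal.zero_or_succ_or_isSuccLimit α with rfl | ⟨γ, rfl⟩ | hα
    · simp [stageSeq_zero] at hx
    · rw [Order.succ_eq_add_one, stageSeq_add_one] at hx ⊢
      exact witnessNbhd_of_le (A := stageSeq κ F f enum γ) hfx ▸ closureUnder_closed hx
    · rw [stageSeq_limit enum hα] at hx ⊢
      obtain ⟨⟨γ, hγ⟩, hxγ⟩ := Set.mem_iUnion.mp hx
      exact (IH γ hγ hxγ).trans
        (Set.subset_iUnion (fun γ : Set.Iio α => stageSeq κ F f enum γ.1) ⟨γ, hγ⟩)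

theorem mk_stageSeq_le (hκ : ℵ₀ ≤ κ) (hF : ∀ x, deg F x ≤ f x) {α : Ordinal}
    (hα : α < (Order.succ κ).ord) : #(stageSeq κ F f enum α) ≤ κ := by
  induction α using WellFoundedLT.induction with
  | _ α IH =>
    rcases Ordinal.zero_or_succ_or_isSuccLimit α with rfl | ⟨γ, rfl⟩ | hlim
    · simp [stageSeq_zero]
    · have hγ := IH γ (Order.lt_succ γ) ((Order.lt_succ γ).trans hα)
      have hseed : #↥(stageSeq κ F f enum γ ∪ {enum γ} ∪ padding κ (stageSeq κ F f enum γ)) ≤ κ :=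
        calc _ ≤ κ + 1 + κ := (Cardinal.mk_union_le _ _).trans (add_le_add
              ((Cardinal.mk_union_le _ _).trans (add_le_add hγ (Cardinal.mk_singleton _).le))
              (mk_padding_le _))
          _ = κ := by
            rw [Cardinal.add_eq_left hκ (Cardinal.one_le_aleph0.trans hκ), Cardinal.add_eq_self hκ]
      rw [Order.succ_eq_add_one, stageSeq_add_one]
      exact mk_closureUnder_le hκ (mk_witnessNbhd_le hκ hF _) hseed
    · rw [stageSeq_limit enum hlim, Set.iUnion_subtype]
      have hcard : α.card ≤ κ := Order.lt_succ_iff.mp (Cardinal.lt_ord.mp hα)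
      exact Cardinal.mk_biUnion_le_of_le hcard hκ _ fun β hβ => IH β hβ (hβ.trans hα)

theorem exists_nbhd_mem_stageSeq_add_one_diff {α : Ordinal} {x : V}
    (hx : x ∈ stageSeq κ F f enum (α + 1)) (hfx : ¬ f x ≤ κ)
    (hnbhd : ¬ nbhd F x ⊆ stageSeq κ F f enum α) :
    ∃ y ∈ nbhd F x, y ∈ stageSeq κ F f enum (α + 1) \ stageSeq κ F f enum α := by
  rw [stageSeq_add_one] at hx ⊢
  obtain ⟨y, ⟨hyF, hyA⟩, hy⟩ :=
    exists_mem_witnessNbhd hfx (Set.nonempty_of_not_subset hnbhd)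
  exact ⟨y, hyF, closureUnder_closed hx hy, hyA⟩

theorem mk_stageSeq_add_one_diff (hκ : ℵ₀ ≤ κ) (hF : ∀ x, deg F x ≤ f x)
    (hV : #V = Order.succ κ) {α : Ordinal} (hα : α + 1 < (Order.succ κ).ord) :
    #↥(stageSeq κ F f enum (α + 1) \ stageSeq κ F f enum α) = κ := by
  have hAα : #(stageSeq κ F f enum α) < #V :=
    hV ▸ (mk_stageSeq_le enum hκ hF ((Order.lt_add_one_iff.mpr le_rfl).trans hα)).trans_lt
      (Order.lt_succ κ)
  have : Infinite V := Cardinal.infinite_iff.mpr (hV ▸ hκ.trans (Order.le_succ κ))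
  have ⟨hPA, hP⟩ := padding_spec (κ := κ) (A := stageSeq κ F f enum α)
    (by rw [Cardinal.mk_compl_of_infinite _ hAα, hV]; exact Order.le_succ κ)
  refine le_antisymm ((Cardinal.mk_le_mk_of_subset Set.sdiff_subset).trans
    (mk_stageSeq_le enum hκ hF hα))
    (hP.ge.trans (Cardinal.mk_le_mk_of_subset fun y hy => ⟨?_, hPA hy⟩))
  rw [stageSeq_add_one]
  exact subset_closureUnder _ _ (Or.inr hy)

end StageSeq

theorem exists_surjOn_Iio_ord (W : Type u) [Nonempty W] :
    ∃ e : Ordinal → W, ∀ x, ∃ α < (#W).ord, e α = x := by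
  obtain ⟨r, _, hr⟩ := Cardinal.exists_ord_eq W
  exact ⟨Function.invFun (Ordinal.typein r), fun x => ⟨Ordinal.typein r x,
    hr ▸ Ordinal.typein_lt_type r x, Function.leftInverse_invFun (Ordinal.typein_injective r) x⟩⟩

theorem exists_stages_of_isPerfect {κ : Cardinal} (hκ : ℵ₀ ≤ κ) {E F : Set (Sym2 V)}
    {f : V → Cardinal} (hV : #V = Order.succ κ) (hF : IsPerfect E F f) :
    ∃ A : Ordinal → Set V,
      A 0 = ∅ ∧
      (∀ α < (Order.succ κ).ord, ∀ β, α ≤ β → β < (Order.succ κ).ord → A α ⊆ A β) ∧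
      (∀ α < (Order.succ κ).ord, Order.IsSuccLimit α → A α = ⋃ β : Set.Iio α, A β.1) ∧
      (⋃ α : Set.Iio (Order.succ κ).ord, A α.1) = Set.univ ∧
      (∀ α < (Order.succ κ).ord, #↥(A (α + 1) \ A α) = κ) ∧
      (∀ α < (Order.succ κ).ord, ∃ F', IsKPerfect κ
        (inducedE (stageVerts f (Order.succ κ) (A α) (A (α + 1)))
          (stageEdges E f (Order.succ κ) (A α) (A (α + 1)))) F' (fun x => f x.1)) := by
  have hsucc : ∀ α < (Order.succ κ).ord, α + 1 < (Order.succ κ).ord :=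
    fun _ => (Cardinal.isSuccLimit_ord (hκ.trans (Order.le_succ κ))).succ_lt
  have hdeg : ∀ x, deg F x ≤ f x := fun x => (hF.2 x).le
  have : Nonempty V := Cardinal.mk_ne_zero_iff.mp (hV ▸ (Cardinal.succ_pos κ).ne')
  obtain ⟨enum, henum⟩ := exists_surjOn_Iio_ord V
  set A := stageSeq κ F f enum
  refine ⟨A, stageSeq_zero enum, fun α _ β h _ => stageSeq_mono enum h,
    fun α _ h => stageSeq_limit enum h, Set.eq_univ_of_forall fun x => ?_,
    fun α hα => mk_stageSeq_add_one_diff enum hκ hdeg hV (hsucc α hα), fun α hα => ?_⟩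
  · obtain ⟨α, hα, rfl⟩ := henum x
    refine Set.mem_iUnion.mpr ⟨⟨α + 1, hsucc α (hV ▸ hα)⟩, ?_⟩
    show enum α ∈ stageSeq κ F f enum (α + 1)
    rw [stageSeq_add_one]
    exact subset_closureUnder _ _ (Or.inl (Or.inr rfl))
  refine exists_isKPerfect_stage hF (fun x => hF.2 x ▸ hV ▸ deg_le_mk F x)
    (fun x hx => nbhd_subset_stageSeq enum hx) (fun x hx => nbhd_subset_stageSeq enum hx)
    fun x hx hfx => exists_nbhd_mem_stageSeq_add_one_diff enum hx hfx.not_ge fun hsub => ?_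
  refine hfx.not_ge ?_
  calc f x = #(nbhd F x) := (hF.2 x).symm.trans (deg_eq_mk_nbhd F x)
    _ ≤ #(A α) := Cardinal.mk_le_mk_of_subset hsub
    _ ≤ κ := mk_stageSeq_le enum hκ hdeg hα

/-- Theorem 3. -/
theorem statement_13 (κ : Cardinal) (hκ : ℵ₀ ≤ κ) (V : Type)
    (E : Set (Sym2 V)) (f : V → Cardinal)
    (hC : inC E f) (hV : Cardinal.mk V = Order.succ κ) :
    (∃ F, IsPerfect E F f) ↔
      ∃ A : Ordinal → Set V,
        A 0 = ∅ ∧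
        (∀ α < (Order.succ κ).ord, ∀ β, α ≤ β → β < (Order.succ κ).ord → A α ⊆ A β) ∧
        (∀ α < (Order.succ κ).ord, Order.IsSuccLimit α → A α = ⋃ β : Set.Iio α, A β.1) ∧
        (⋃ α : Set.Iio (Order.succ κ).ord, A α.1) = Set.univ ∧
        (∀ α < (Order.succ κ).ord, Cardinal.mk ↥(A (α + 1) \ A α) = κ) ∧
        (∀ α < (Order.succ κ).ord,
          ∃ F : Set (Sym2 ↥(A (α + 1) \ (A α \ {x | f x = Order.succ κ}))),
            IsKPerfect κ
              (inducedE (A (α + 1) \ (A α \ {x | f x = Order.succ κ}))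
                {e ∈ E | ∃ x y, e = s(x, y) ∧
                  x ∈ A (α + 1) \ (A α \ {x | f x = Order.succ κ}) ∧
                  y ∈ A (α + 1) \ A α})
              F (fun x => f x.1)) := by
  constructor
  · rintro ⟨F, hF⟩
    exact exists_stages_of_isPerfect hκ hV hF
  · rintro ⟨A, h0, hmono, hlim, hcover, -, hfac⟩
    exact exists_isPerfect_of_stages hκ hV (fun x => hV ▸ (hC.2 x).trans (deg_le_mk E x))
      h0 hmono hlim hcover hfac

end FFactor
end

section
/- For a countable graph G and f : V(G) → ω ∪ {ℵ₀} with f(x) ≤ d_E(x), if (G,f) satisfies a hereditary property P and (v_i)_{i<ω} is an enumeration of V(G) in which every vertex x with f(x) = ℵ₀ occurs infinitely often, then there exists an increasing sequence (F_k)_{k<ω} of finite f-factors such that P(G − F_k, f − d_{F_k}) holds for each k, d_{F_k}(v_k) = f(v_k) whenever f(v_k) < ℵ₀, and F_k \ F_{k−1} contains an edge at v_k whenever f(v_k) = ℵ₀; consequently F = ⋃_k F_k is a perfect f-factor. -/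
open Cardinal Set
open scoped Classical

namespace FFactor

variable {V : Type}

/-! Start from `F = ∅` and, at step `k`, look after `v k`. Heredity of `P`, applied to
`(G - F, f - d_F)` at a vertex `x` with `(f - d_F)(x) > 0`, yields an edge `xy` outside `F` with
`P (G - F - xy, (f - d_F)_{x,y})`, and `(f - d_F)_{x,y} = f - d_{F + xy}`; so `F + xy` again
satisfies the invariant. Repeating this saturates `v k` when `f (v k)` is finite, and adds one
new edge at `v k` otherwise. In the union, a vertex of finite `f` gets degree exactly `f`, since
finitely many of its edges already lie in a single `F k`; a vertex with `f = ℵ₀` is visited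
infinitely often and receives a new edge at each visit. -/

theorem _root_.Set.exists_subset_of_finite_subset_iUnion_of_monotone {α : Type*}
    {S : ℕ → Set α} (hS : Monotone S) {t : Set α} (ht : t.Finite) (h : t ⊆ ⋃ k, S k) :
    ∃ K, t ⊆ S K := by
  simpa using hS.directed_le.exists_mem_subset_of_finset_subset_biUnion (s := ht.toFinset)
    (by simpa using h)

theorem _root_.Cardinal.mk_iUnion_le_natCast_of_monotone {α : Type*} {S : ℕ → Set α}
    (hS : Monotone S) {n : ℕ} (h : ∀ k, #(S k) ≤ n) : #(⋃ k, S k) ≤ n := by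
  by_contra! hlt
  obtain ⟨t, htS, htn⟩ := Cardinal.le_mk_iff_exists_subset.mp (Cardinal.add_one_le_of_lt hlt)
  have htfin : t.Finite :=
    Cardinal.mk_lt_aleph0_iff.mp (by rw [htn]; exact_mod_cast natCast_lt_aleph0)
  obtain ⟨K, hK⟩ := Set.exists_subset_of_finite_subset_iUnion_of_monotone hS htfin htS
  have hcard : n + 1 ≤ n := by
    exact_mod_cast htn ▸ (mk_le_mk_of_subset hK).trans (h K)
  omega

theorem _root_.Set.infinite_iUnion_of_monotone {α : Type*} {S : ℕ → Set α} (hS : Monotone S)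
    (h : ∀ K, ∃ k, ¬ S k ⊆ S K) : (⋃ k, S k).Infinite := by
  intro hfin
  obtain ⟨K, hK⟩ := Set.exists_subset_of_finite_subset_iUnion_of_monotone hS hfin subset_rfl
  obtain ⟨k, hk⟩ := h K
  exact hk ((subset_iUnion S k).trans hK)

theorem _root_.exists_seq_of_forall_exists {α β : Type*} {p : α → Prop} {r : α → β → α → Prop}
    (a : α) (ha : p a) (h : ∀ a, p a → ∀ b, ∃ a', p a' ∧ r a b a') (u : ℕ → β) :
    ∃ s : ℕ → α, s 0 = a ∧ ∀ k, p (s k) ∧ r (s k) (u k) (s (k + 1)) := by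
  choose g hg using h
  let s : ℕ → {a // p a} := fun n =>
    Nat.rec ⟨a, ha⟩ (fun k a' => ⟨g a' a'.2 (u k), (hg _ _ _).1⟩) n
  exact ⟨fun n => (s n).1, rfl, fun k => ⟨(s k).2, (hg (s k).1 (s k).2 (u k)).2⟩⟩

section
variable {E F F' : Set (Sym2 V)} {f : V → Cardinal} {x y : V} {e : Sym2 V}

theorem deg_eq_mk_inter (F : Set (Sym2 V)) (x : V) : deg F x = #↥(F ∩ {e | x ∈ e}) := rfl

theorem deg_lt_aleph0 (hF : F.Finite) (x : V) : deg F x < ℵ₀ :=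
  (hF.subset inter_subset_left).lt_aleph0

theorem deg_empty (x : V) : deg ∅ x = 0 := by
  simp [deg_eq_mk_inter]

theorem deg_insert_of_mem (he : e ∉ F) (hx : x ∈ e) : deg (insert e F) x = deg F x + 1 := by
  rw [deg_eq_mk_inter, deg_eq_mk_inter, insert_inter_of_mem (show e ∈ {e | x ∈ e} from hx),
    mk_insert fun h => he h.1]

theorem deg_insert_of_notMem (hx : x ∉ e) : deg (insert e F) x = deg F x := by
  rw [deg_eq_mk_inter, deg_eq_mk_inter, insert_inter_of_notMem (show e ∉ {e | x ∈ e} from hx)]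

theorem fsub_of_natCast {n d : ℕ} (hn : f x = n) (hd : deg F x = d) :
    fsub f F x = ((n - d : ℕ) : Cardinal) := by
  simp [fsub, hn, hd]

theorem fsub_of_aleph0_le (h : ℵ₀ ≤ f x) : fsub f F x = f x :=
  if_neg h.not_gt

theorem fsub_congr (h : deg F x = deg F' x) : fsub f F x = fsub f F' x := by
  simp only [fsub, h]

theorem fsub_empty : fsub f ∅ = f := by
  funext x
  rcases lt_or_ge (f x) ℵ₀ with hfx | hfx
  · obtain ⟨n, hn⟩ := lt_aleph0.mp hfx
    rw [fsub_of_natCast hn (d := 0) (by simp [deg_empty]), hn, Nat.sub_zero]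
  · exact fsub_of_aleph0_le hfx

theorem deg_lt_of_fsub_pos (hF : F.Finite) (h : 0 < fsub f F x) : deg F x < f x := by
  rcases lt_or_ge (f x) ℵ₀ with hfx | hfx
  · obtain ⟨n, hn⟩ := lt_aleph0.mp hfx
    obtain ⟨d, hd⟩ := lt_aleph0.mp (deg_lt_aleph0 hF x)
    rw [fsub_of_natCast hn hd, Nat.cast_pos] at h
    rw [hn, hd, Nat.cast_lt]
    omega
  · exact (deg_lt_aleph0 hF x).trans_le hfx

theorem fxy_fsub (hF : F.Finite) (hxy : s(x, y) ∉ F) (hx : 0 < fsub f F x)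
    (hy : 0 < fsub f F y) : fxy (fsub f F) x y = fsub f (insert s(x, y) F) := by
  funext z
  by_cases hz : z ∈ s(x, y)
  · have hz' := Sym2.mem_iff.mp hz
    have hz0 : 0 < fsub f F z := by rcases hz' with rfl | rfl <;> assumption
    rcases lt_or_ge (f z) ℵ₀ with hfz | hfz
    · obtain ⟨n, hn⟩ := lt_aleph0.mp hfz
      obtain ⟨d, hd⟩ := lt_aleph0.mp (deg_lt_aleph0 hF z)
      have hd' : deg (insert s(x, y) F) z = (d + 1 : ℕ) := by
        rw [deg_insert_of_mem hxy hz, hd, Nat.cast_succ]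
      rw [fsub_of_natCast hn hd, Nat.cast_pos] at hz0
      simp [fxy, fsub_of_natCast hn hd, fsub_of_natCast hn hd', hz', Nat.one_le_iff_ne_zero,
        hz0.ne', Nat.sub_sub]
    · simp [fxy, fsub_of_aleph0_le hfz, hfz.not_gt]
  · have hz' : ¬ (z = x ∨ z = y) := fun h => hz (Sym2.mem_iff.mpr h)
    simp only [fxy, hz', false_and, if_false]
    exact fsub_congr (deg_insert_of_notMem hz).symm

theorem IsFactor.insert (hF : IsFactor E F f) (heE : e ∈ E) (heF : e ∉ F)
    (h : ∀ z ∈ e, deg F z < f z) : IsFactor E (insert e F) f := by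
  refine ⟨insert_subset heE hF.1, fun z => ?_⟩
  by_cases hz : z ∈ e
  · rw [deg_insert_of_mem heF hz]
    exact Cardinal.add_one_le_of_lt (h z hz)
  · rw [deg_insert_of_notMem hz]
    exact hF.2 z

theorem deg_iUnion_le_natCast {F : ℕ → Set (Sym2 V)} (hF : Monotone F) {n : ℕ}
    (h : ∀ k, deg (F k) x ≤ n) : deg (⋃ k, F k) x ≤ n := by
  rw [deg_eq_mk_inter, iUnion_inter]
  exact mk_iUnion_le_natCast_of_monotone (fun k l hkl => inter_subset_inter_left _ (hF hkl)) h

theorem deg_iUnion_le_aleph0 {F : ℕ → Set (Sym2 V)} (hF : ∀ k, (F k).Finite) :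
    deg (⋃ k, F k) x ≤ ℵ₀ :=
  ((countable_iUnion fun k => (hF k).countable).mono inter_subset_left).le_aleph0

theorem aleph0_le_deg_iUnion {F : ℕ → Set (Sym2 V)} (hF : Monotone F)
    (h : ∀ K, ∃ k, ∃ e ∈ F k, x ∈ e ∧ e ∉ F K) : ℵ₀ ≤ deg (⋃ k, F k) x := by
  rw [deg_eq_mk_inter, iUnion_inter, ← infinite_iff, infinite_coe_iff]
  refine infinite_iUnion_of_monotone (fun k l hkl => inter_subset_inter_left _ (hF hkl))
    fun K => ?_
  obtain ⟨k, e, he, hxe, heK⟩ := h K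
  exact ⟨k, fun hsub => heK (hsub ⟨he, hxe⟩).1⟩

theorem isPerfect_iUnion {F : ℕ → Set (Sym2 V)} (hmono : Monotone F)
    (hfin : ∀ k, (F k).Finite) (hfac : ∀ k, IsFactor E (F k) f) (hf : ∀ x, f x ≤ ℵ₀)
    (hsat : ∀ x, f x < ℵ₀ → ∃ k, deg (F k) x = f x)
    (hgrow : ∀ x, f x = ℵ₀ → ∀ K, ∃ k, ∃ e ∈ F k, x ∈ e ∧ e ∉ F K) :
    IsPerfect E (⋃ k, F k) f := by
  refine ⟨iUnion_subset fun k => (hfac k).1, fun x => ?_⟩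
  rcases (hf x).lt_or_eq with hfx | hfx
  · obtain ⟨n, hn⟩ := lt_aleph0.mp hfx
    obtain ⟨k, hk⟩ := hsat x hfx
    refine le_antisymm (hn ▸ deg_iUnion_le_natCast hmono fun k => hn ▸ (hfac k).2 x) ?_
    exact hk ▸ mk_le_mk_of_subset (inter_subset_inter_left _ (subset_iUnion F k))
  · rw [hfx]
    exact le_antisymm (deg_iUnion_le_aleph0 hfin) (aleph0_le_deg_iUnion hmono (hgrow x hfx))

/-- The invariant of the construction. -/
def IsAdmissible (P : GraphProp) (E : Set (Sym2 V)) (f : V → Cardinal) (F : Set (Sym2 V)) :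
    Prop :=
  F.Finite ∧ IsFactor E F f ∧ P V (E \ F) (fsub f F)

def IsStepAt (f : V → Cardinal) (F : Set (Sym2 V)) (x : V) (F' : Set (Sym2 V)) : Prop :=
  F ⊆ F' ∧ (f x < ℵ₀ → deg F' x = f x) ∧ (ℵ₀ ≤ f x → ∃ e ∈ F', x ∈ e ∧ e ∉ F)

variable {P : GraphProp}

theorem isAdmissible_empty (h : P V E f) : IsAdmissible P E f ∅ :=
  ⟨finite_empty, ⟨empty_subset E, fun x => by simp [deg_empty]⟩,
    by rwa [sdiff_empty, fsub_empty]⟩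

theorem IsAdmissible.exists_insert (hP : Hereditary P) (hF : IsAdmissible P E f F)
    (hx : 0 < fsub f F x) : ∃ e ∉ F, x ∈ e ∧ IsAdmissible P E f (insert e F) := by
  obtain ⟨hFfin, hFfac, hPF⟩ := hF
  obtain ⟨y, hy, ⟨hxyE, hxyF⟩, hPxy⟩ := (hP V _ _ hPF).2 x hx
  refine ⟨s(x, y), hxyF, Sym2.mem_mk_left x y, hFfin.insert _, hFfac.insert hxyE hxyF ?_, ?_⟩
  · intro z hz
    rcases Sym2.mem_iff.mp hz with rfl | rfl
    exacts [deg_lt_of_fsub_pos hFfin hx, deg_lt_of_fsub_pos hFfin hy]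
  · rwa [← union_singleton, ← sdiff_sdiff, union_singleton, ← fxy_fsub hFfin hxyF hx hy]

theorem IsAdmissible.exists_saturate (hP : Hereditary P) (hF : IsAdmissible P E f F) {n : ℕ}
    (hn : f x = n) : ∃ F', F ⊆ F' ∧ IsAdmissible P E f F' ∧ deg F' x = f x := by
  obtain ⟨d, hd⟩ := lt_aleph0.mp (deg_lt_aleph0 hF.1 x)
  obtain ⟨m, hm⟩ : ∃ m, n - d = m := ⟨_, rfl⟩
  induction m generalizing F d with
  | zero =>
    have hdn : d ≤ n := by exact_mod_cast hd ▸ hn ▸ hF.2.1.2 x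
    exact ⟨F, subset_rfl, hF, by rw [hd, hn]; congr 1; omega⟩
  | succ m ih =>
    obtain ⟨e, heF, hxe, he⟩ := hF.exists_insert hP (x := x)
      (by rw [fsub_of_natCast hn hd, hm]; exact_mod_cast m.succ_pos)
    obtain ⟨F', hsub, hF', hdeg⟩ := ih he (d := d + 1)
      (by rw [deg_insert_of_mem heF hxe, hd, Nat.cast_succ]) (by omega)
    exact ⟨F', (subset_insert e F).trans hsub, hF', hdeg⟩

theorem IsAdmissible.exists_step (hP : Hereditary P) (hF : IsAdmissible P E f F) (x : V) :
    ∃ F', IsAdmissible P E f F' ∧ IsStepAt f F x F' := by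
  rcases lt_or_ge (f x) ℵ₀ with hfx | hfx
  · obtain ⟨n, hn⟩ := lt_aleph0.mp hfx
    obtain ⟨F', hsub, hF', hdeg⟩ := hF.exists_saturate hP hn
    exact ⟨F', hF', hsub, fun _ => hdeg, fun h => absurd hfx h.not_gt⟩
  · obtain ⟨e, heF, hxe, he⟩ := hF.exists_insert hP (x := x)
      (by rw [fsub_of_aleph0_le hfx]; exact aleph0_pos.trans_le hfx)
    exact ⟨insert e F, he, subset_insert e F, fun h => absurd h hfx.not_gt,
      fun _ => ⟨e, mem_insert e F, hxe, heF⟩⟩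

end

theorem statement_18_general (V : Type) (E : Set (Sym2 V)) (f : V → Cardinal)
    (hf : ∀ x, f x ≤ ℵ₀)
    (P : GraphProp) (hP : Hereditary P) (h : P V E f)
    (v : ℕ → V) (hsurj : Function.Surjective v)
    (hinf : ∀ x : V, f x = ℵ₀ → {i : ℕ | v i = x}.Infinite) :
    ∃ F : ℕ → Set (Sym2 V),
      (∀ k l : ℕ, k ≤ l → F k ⊆ F l) ∧
      (∀ k, (F k).Finite ∧ IsFactor E (F k) f) ∧
      (∀ k, P V (E \ F k) (fsub f (F k))) ∧
      (∀ k, f (v k) < ℵ₀ → deg (F k) (v k) = f (v k)) ∧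
      (∀ k, f (v k) = ℵ₀ → ∃ e ∈ F k, v k ∈ e ∧ (k = 0 ∨ e ∉ F (k - 1))) ∧
      IsPerfect E (⋃ k, F k) f := by
  obtain ⟨F, -, hF⟩ := exists_seq_of_forall_exists ∅ (isAdmissible_empty h)
    (fun _ hF x => hF.exists_step hP x) v
  have hmono : Monotone F := monotone_nat_of_le_succ fun k => (hF k).2.1
  have hadm k : IsAdmissible P E f (F (k + 1)) := (hF (k + 1)).1
  have hsat k (hk : f (v k) < ℵ₀) : deg (F (k + 1)) (v k) = f (v k) := (hF k).2.2.1 hk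
  have hnew k (hk : f (v k) = ℵ₀) : ∃ e ∈ F (k + 1), v k ∈ e ∧ e ∉ F k := (hF k).2.2.2 hk.ge
  refine ⟨fun k => F (k + 1), fun k l hkl => hmono (by omega),
    fun k => ⟨(hadm k).1, (hadm k).2.1⟩, fun k => (hadm k).2.2, hsat, fun k hk => ?_, ?_⟩
  · obtain ⟨e, he, hxe, heF⟩ := hnew k hk
    cases k with
    | zero => exact ⟨e, he, hxe, .inl rfl⟩
    | succ k => exact ⟨e, he, hxe, .inr heF⟩
  refine isPerfect_iUnion (fun k l hkl => hmono (by omega)) (fun k => (hadm k).1)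
    (fun k => (hadm k).2.1) hf (fun x hx => ?_) (fun x hx K => ?_)
  · obtain ⟨k, rfl⟩ := hsurj x
    exact ⟨k, hsat k hx⟩
  · obtain ⟨k, hkv, hKk⟩ := (hinf x hx).exists_gt K
    obtain ⟨e, he, hxe, heF⟩ := hnew k (hkv ▸ hx)
    exact ⟨k, e, he, hkv ▸ hxe, fun heK => heF (hmono (by omega) heK)⟩

/-- the construction in the proof of Theorem 1. -/
theorem statement_18 (V : Type) (E : Set (Sym2 V)) (f : V → Cardinal)
    (hC : inC E f) (hV : Cardinal.mk V = ℵ₀) (hf : ∀ x, f x ≤ ℵ₀)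
    (P : GraphProp) (hP : Hereditary P) (h : P V E f)
    (v : ℕ → V) (hsurj : Function.Surjective v)
    (hinf : ∀ x : V, f x = ℵ₀ → {i : ℕ | v i = x}.Infinite) :
    ∃ F : ℕ → Set (Sym2 V),
      (∀ k l : ℕ, k ≤ l → F k ⊆ F l) ∧
      (∀ k, (F k).Finite ∧ IsFactor E (F k) f) ∧
      (∀ k, P V (E \ F k) (fsub f (F k))) ∧
      (∀ k, f (v k) < ℵ₀ → deg (F k) (v k) = f (v k)) ∧
      (∀ k, f (v k) = ℵ₀ → ∃ e ∈ F k, v k ∈ e ∧ (k = 0 ∨ e ∉ F (k - 1))) ∧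
      IsPerfect E (⋃ k, F k) f :=
  statement_18_general V E f hf P hP h v hsurj hinf

end FFactor
end
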